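/- arXiv:1907.10771 — 2 statements merged into one kernel-verified Lean document; each statement's English description precedes it below -/
import Mathlib

section
/- Let M be the star-with-loops transition matrix with parameters T ≥ 1 and w_C, w_S > 0, and let B be a symmetric row-stochastic m×m matrix with m ≥ 2 and TwoSidedGap(B) > 0. Then every eigenvalue of the Kronecker product M ⊗ B is real, the eigenvalue 1 occurs with multiplicity one, and every other eigenvalue of M ⊗ B has absolute value at most max(1 − TwoSidedGap(B), 1/2). (This is the local-expansion bound for links of the local densifier construction contained in a single cluster: such a link's 1-skeleton has adjacency matrix M ⊗ B, so its two-sided spectral gap is at least min(TwoSidedGap(B), 1/2).) -/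
open Matrix Finset BigOperators Kronecker

noncomputable def eigs {α : Type*} [Fintype α] [DecidableEq α] (M : Matrix α α ℝ) : Multiset ℝ :=
  M.charpoly.roots

noncomputable def sortedEigs {α : Type*} [Fintype α] [DecidableEq α] (M : Matrix α α ℝ) : List ℝ :=
  (eigs M).sort (· ≤ ·)

noncomputable def secondEig {α : Type*} [Fintype α] [DecidableEq α] (M : Matrix α α ℝ) : ℝ :=
  (sortedEigs M).getD (Fintype.card α - 2) 0

noncomputable def minEig {α : Type*} [Fintype α] [DecidableEq α] (M : Matrix α α ℝ) : ℝ :=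
  (sortedEigs M).getD 0 0

noncomputable def oneSidedGap {α : Type*} [Fintype α] [DecidableEq α] (M : Matrix α α ℝ) : ℝ :=
  1 - secondEig M

noncomputable def twoSidedGap {α : Type*} [Fintype α] [DecidableEq α] (M : Matrix α α ℝ) : ℝ :=
  1 - max |secondEig M| |minEig M|

def RowStochastic {α : Type*} [Fintype α] (M : Matrix α α ℝ) : Prop :=
  (∀ i j, 0 ≤ M i j) ∧ ∀ i, ∑ j, M i j = 1

/-- The star-with-loops transition matrix with parameters T, w_C, w_S:
center is vertex 0, satellites are 1,…,T. -/
noncomputable def starM (T : ℕ) (wC wS : ℝ) : Matrix (Fin (T + 1)) (Fin (T + 1)) ℝ :=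
  fun i j =>
    if i = 0 then (if j = 0 then wC / (wC + T * wS) else wS / (wC + T * wS))
    else if j = 0 then 1 / 2
    else if i = j then 1 / 2
    else 0

/-!
The walk `M` is reversible with respect to the weights `(w_C + T w_S, 2 w_S, …, 2 w_S)`, so it is
similar to a symmetric matrix and hence diagonalizable; a Schur complement on the center shows
that its spectrum is `1`, `w_C / D - 1/2` and `1/2` with multiplicity `T - 1`. For diagonalizable
factors the spectrum of a Kronecker product is the multiset of pairwise products. The products
with the eigenvalue `1` of `M` reproduce the spectrum of `B`, in which `1` is simple because the
gap is positive and every other eigenvalue lies between the smallest and the second largest one.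
All remaining products have modulus at most `1/2`, since `|w_C / D - 1/2| ≤ 1/2` and, by
Gershgorin, the eigenvalues of a stochastic matrix have modulus at most `1`.
-/

namespace Multiset

variable {α β γ δ : Type*}

theorem map_product_map (s : Multiset α) (t : Multiset β)
    (f : α → γ) (g : β → δ) : s.map f ×ˢ t.map g = (s ×ˢ t).map (Prod.map f g) := by
  induction s using Multiset.induction with
  | empty => simp
  | cons a s ih => simp [ih, Multiset.map_map]

section LinearOrder

variable [LinearOrder α]

theorem sort_getD_zero_le {s : Multiset α} {x : α} (d : α) (hx : x ∈ s) :
    (s.sort (· ≤ ·)).getD 0 d ≤ x := by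
  obtain ⟨i, hi, rfl⟩ := List.getElem_of_mem ((mem_sort (· ≤ ·)).mpr hx)
  rw [List.getD_eq_getElem _ _ (by omega)]
  exact (pairwise_sort s _).sortedLE.getElem_le_getElem_of_le (Nat.zero_le i)

theorem le_sort_getD_card_sub_two {s : Multiset α} {a x : α} (d : α) (ha : a ∈ s)
    (hmax : ∀ y ∈ s, y ≤ a) (hx : x ∈ s.erase a) :
    x ≤ (s.sort (· ≤ ·)).getD (card s - 2) d := by
  set L := s.sort (· ≤ ·)
  have haL : a ∈ L := (mem_sort _).mpr ha
  have hlast : L.getLast (List.ne_nil_of_mem haL) = a :=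
    le_antisymm (hmax _ ((mem_sort _).mp (List.getLast_mem _)))
      ((pairwise_sort s _).rel_getLast haL)
  have hs : s = a ::ₘ ↑L.dropLast := by
    calc s = ↑(L.dropLast ++ [L.getLast (List.ne_nil_of_mem haL)]) := by
          rw [List.dropLast_concat_getLast]; exact (sort_eq s _).symm
      _ = a ::ₘ ↑L.dropLast := by rw [hlast, ← coe_add, add_comm]; rfl
  rw [hs, erase_cons_head, mem_coe] at hx
  obtain ⟨i, hi, rfl⟩ := List.getElem_of_mem hx
  have hlen : L.length = card s := length_sort _
  rw [List.length_dropLast] at hi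
  rw [List.getElem_dropLast, List.getD_eq_getElem _ _ (by omega)]
  exact (pairwise_sort s _).sortedLE.getElem_le_getElem_of_le (by omega)

end LinearOrder

end Multiset

open Polynomial

namespace Matrix

variable {K : Type*} [Field K] {α β : Type*} [Fintype α] [DecidableEq α] [Fintype β] [DecidableEq β]

def IsDiagonalizable (A : Matrix α α K) : Prop :=
  ∃ (P Q : Matrix α α K) (d : α → K), P * Q = 1 ∧ A = P * diagonal d * Q

theorem roots_charpoly_mul_diagonal_mul {P Q : Matrix α α K} (hPQ : P * Q = 1) (d : α → K) :
    (P * diagonal d * Q).charpoly.roots = Finset.univ.val.map d := by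
  rw [charpoly_mul_comm, ← Matrix.mul_assoc, mul_eq_one_comm.mp hPQ, Matrix.one_mul,
    charpoly_diagonal,
    roots_prod _ _ (Finset.prod_ne_zero_iff.mpr fun i _ => X_sub_C_ne_zero (d i))]
  simp

theorem IsDiagonalizable.card_roots_charpoly {A : Matrix α α K} (hA : A.IsDiagonalizable) :
    Multiset.card A.charpoly.roots = Fintype.card α := by
  obtain ⟨P, Q, d, hPQ, rfl⟩ := hA
  simp [roots_charpoly_mul_diagonal_mul hPQ]

theorem IsDiagonalizable.conj {A : Matrix α α K} (hA : A.IsDiagonalizable) {E F : Matrix α α K}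
    (hEF : E * F = 1) : (E * A * F).IsDiagonalizable := by
  obtain ⟨P, Q, d, hPQ, rfl⟩ := hA
  refine ⟨E * P, Q * F, d, ?_, by simp only [Matrix.mul_assoc]⟩
  rw [Matrix.mul_assoc, ← Matrix.mul_assoc P, hPQ, Matrix.one_mul, hEF]

theorem IsDiagonalizable.kronecker {A : Matrix α α K} {B : Matrix β β K}
    (hA : A.IsDiagonalizable) (hB : B.IsDiagonalizable) : (A ⊗ₖ B).IsDiagonalizable := by
  obtain ⟨P₁, Q₁, d₁, h₁, rfl⟩ := hA
  obtain ⟨P₂, Q₂, d₂, h₂, rfl⟩ := hB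
  refine ⟨P₁ ⊗ₖ P₂, Q₁ ⊗ₖ Q₂, fun p => d₁ p.1 * d₂ p.2, ?_, ?_⟩
  · rw [← mul_kronecker_mul, h₁, h₂, one_kronecker_one]
  · rw [← diagonal_kronecker_diagonal, ← mul_kronecker_mul, ← mul_kronecker_mul]

theorem roots_charpoly_kronecker {A : Matrix α α K} {B : Matrix β β K}
    (hA : A.IsDiagonalizable) (hB : B.IsDiagonalizable) :
    (A ⊗ₖ B).charpoly.roots =
      (A.charpoly.roots ×ˢ B.charpoly.roots).map fun p => p.1 * p.2 := by
  obtain ⟨P₁, Q₁, d₁, h₁, rfl⟩ := hA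
  obtain ⟨P₂, Q₂, d₂, h₂, rfl⟩ := hB
  rw [mul_kronecker_mul, mul_kronecker_mul, diagonal_kronecker_diagonal,
    roots_charpoly_mul_diagonal_mul (by rw [← mul_kronecker_mul, h₁, h₂, one_kronecker_one]),
    roots_charpoly_mul_diagonal_mul h₁, roots_charpoly_mul_diagonal_mul h₂,
    Multiset.map_product_map, Multiset.map_map, ← Finset.product_val, Finset.univ_product_univ]
  rfl

theorem IsDiagonalizable.of_isSymm {A : Matrix α α ℝ} (hA : A.IsSymm) : A.IsDiagonalizable := by
  have hA' : A.IsHermitian := by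
    rwa [IsHermitian, conjTranspose_eq_transpose_of_trivial]
  refine ⟨hA'.eigenvectorUnitary, star (hA'.eigenvectorUnitary : Matrix α α ℝ), hA'.eigenvalues,
    Matrix.mem_unitaryGroup_iff.mp hA'.eigenvectorUnitary.2, ?_⟩
  simpa using hA'.spectral_theorem

theorem IsDiagonalizable.of_detailedBalance {A : Matrix α α ℝ} {π : α → ℝ} (hπ : ∀ i, 0 < π i)
    (hA : ∀ i j, π i * A i j = π j * A j i) : A.IsDiagonalizable := by
  set δ : α → ℝ := fun i => Real.sqrt (π i)
  have hδ : ∀ i, δ i ≠ 0 := fun i => (Real.sqrt_pos.mpr (hπ i)).ne'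
  have hδδ : diagonal δ * diagonal δ⁻¹ = 1 := by
    rw [diagonal_mul_diagonal, ← diagonal_one]
    exact congrArg diagonal (funext fun i => mul_inv_cancel₀ (hδ i))
  have hsymm : (diagonal δ * A * diagonal δ⁻¹).IsSymm := by
    ext i j
    have hδsq : ∀ i, δ i ^ 2 = π i := fun i => Real.sq_sqrt (hπ i).le
    simp only [transpose_apply, mul_diagonal, diagonal_mul, Pi.inv_apply]
    field_simp [hδ i, hδ j]
    rw [hδsq, hδsq]
    linear_combination hA j i
  convert (IsDiagonalizable.of_isSymm hsymm).conj (mul_eq_one_comm.mp hδδ) using 1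
  simp only [← Matrix.mul_assoc, mul_eq_one_comm.mp hδδ, Matrix.one_mul]
  rw [Matrix.mul_assoc, mul_eq_one_comm.mp hδδ, Matrix.mul_one]

theorem mem_roots_charpoly_iff_hasEigenvalue {A : Matrix α α K} {μ : K} :
    μ ∈ A.charpoly.roots ↔ Module.End.HasEigenvalue A.toLin' μ := by
  rw [Module.End.hasEigenvalue_iff_isRoot_charpoly, charpoly_toLin',
    mem_roots (charpoly_monic A).ne_zero]

theorem det_fromBlocks_const_smul_one (a b c : K) {d : K} (hd : d ≠ 0) :
    (fromBlocks (of fun _ _ => a : Matrix (Fin 1) (Fin 1) K) (of fun _ _ => b) (of fun _ _ => c)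
      (d • 1 : Matrix β β K)).det = d ^ Fintype.card β * (a - Fintype.card β * b * c / d) := by
  let _ : Invertible (d • 1 : Matrix β β K) :=
    ⟨d⁻¹ • 1, by rw [smul_mul_smul_comm, one_mul, inv_mul_cancel₀ hd, one_smul],
      by rw [smul_mul_smul_comm, one_mul, mul_inv_cancel₀ hd, one_smul]⟩
  have hinv : ⅟(d • 1 : Matrix β β K) = d⁻¹ • 1 := rfl
  rw [det_fromBlocks₂₂, hinv, det_smul, det_one, mul_one, det_fin_one]
  congr 1
  simp [mul_apply, Finset.sum_const, div_eq_mul_inv]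
  ring

end Matrix

namespace RowStochastic

variable {α : Type*} [Fintype α] [DecidableEq α]

theorem abs_le_one_of_mem_roots_charpoly {A : Matrix α α ℝ} (hA : RowStochastic A) {μ : ℝ}
    (hμ : μ ∈ A.charpoly.roots) : |μ| ≤ 1 := by
  obtain ⟨k, hk⟩ := eigenvalue_mem_ball (Matrix.mem_roots_charpoly_iff_hasEigenvalue.mp hμ)
  have hrow : A k k + ∑ j ∈ Finset.univ.erase k, A k j = 1 :=
    (Finset.add_sum_erase _ _ (Finset.mem_univ k)).trans (hA.2 k)
  have hball : |μ - A k k| ≤ ∑ j ∈ Finset.univ.erase k, A k j := by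
    simpa [Metric.mem_closedBall, Real.dist_eq, abs_of_nonneg (hA.1 k _)] using hk
  rw [abs_le] at hball ⊢
  constructor <;> linarith [hA.1 k k]

theorem one_mem_roots_charpoly [Nonempty α] {A : Matrix α α ℝ} (hA : RowStochastic A) :
    (1 : ℝ) ∈ A.charpoly.roots := by
  refine Matrix.mem_roots_charpoly_iff_hasEigenvalue.mpr
    (Module.End.hasEigenvalue_of_hasEigenvector (x := fun _ => 1) ⟨?_, ?_⟩)
  · rw [Module.End.mem_eigenspace_iff, Matrix.toLin'_apply]
    ext i
    simp [Matrix.mulVec, dotProduct, hA.2 i]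
  · exact Function.ne_iff.mpr ⟨Classical.arbitrary α, one_ne_zero⟩

end RowStochastic

def finOneSumEquiv (T : ℕ) : Fin 1 ⊕ Fin T ≃ Fin (T + 1) :=
  finSumFinEquiv.trans (finCongr (add_comm 1 T))

@[simp]
theorem finOneSumEquiv_inl {T : ℕ} (i : Fin 1) : finOneSumEquiv T (Sum.inl i) = 0 := by
  ext; simp [finOneSumEquiv]

@[simp]
theorem finOneSumEquiv_inr {T : ℕ} (j : Fin T) : finOneSumEquiv T (Sum.inr j) = j.succ := by
  ext; simp [finOneSumEquiv]

theorem starM_submatrix_eq_fromBlocks (T : ℕ) (wC wS x : ℝ) :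
    (Matrix.scalar (Fin (T + 1)) x - starM T wC wS).submatrix (finOneSumEquiv T)
        (finOneSumEquiv T) =
      Matrix.fromBlocks (Matrix.of fun _ _ => x - wC / (wC + T * wS))
        (Matrix.of fun _ _ => -(wS / (wC + T * wS))) (Matrix.of fun _ _ => -(1 / 2))
        ((x - 1 / 2) • 1) := by
  ext (i | i) (j | j) <;> simp only [submatrix_apply, finOneSumEquiv_inl, finOneSumEquiv_inr]
  · simp [starM]
  · simp [starM, diagonal_apply_ne _ (Fin.succ_ne_zero j).symm]
  · simp [starM, Fin.succ_ne_zero]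
  · by_cases hij : i = j
    · subst hij; simp [starM, Fin.succ_ne_zero]
    · simp [starM, Fin.succ_ne_zero, hij]

theorem charpoly_starM {T : ℕ} (hT : 1 ≤ T) {wC wS : ℝ} (hD : wC + T * wS ≠ 0) :
    (starM T wC wS).charpoly =
      (X - C 1) * (X - C (wC / (wC + T * wS) - 1 / 2)) * (X - C (1 / 2)) ^ (T - 1) := by
  -- Compare values away from `1 / 2`, where the satellite block `(x - 1/2) • 1` is invertible.
  refine eq_of_infinite_eval_eq _ _ ((Set.finite_singleton (1 / 2 : ℝ)).infinite_compl.mono ?_)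
  intro x hx
  have hx : x - 1 / 2 ≠ 0 := sub_ne_zero.mpr hx
  rw [Set.mem_ofPred_eq, eval_charpoly, ← det_submatrix_equiv_self (finOneSumEquiv T),
    starM_submatrix_eq_fromBlocks, det_fromBlocks_const_smul_one _ _ _ hx, Fintype.card_fin]
  simp only [eval_mul, eval_pow, eval_sub, eval_X, eval_C]
  obtain ⟨t, rfl⟩ : ∃ t, T = t + 1 := ⟨T - 1, by omega⟩
  obtain ⟨y, rfl⟩ : ∃ y, x = y + 1 / 2 := ⟨x - 1 / 2, by ring⟩
  rw [add_sub_cancel_right] at hx ⊢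
  rw [Nat.add_sub_cancel, pow_succ]
  field_simp
  ring

theorem roots_charpoly_starM {T : ℕ} (hT : 1 ≤ T) {wC wS : ℝ} (hD : wC + T * wS ≠ 0) :
    (starM T wC wS).charpoly.roots =
      1 ::ₘ (wC / (wC + T * wS) - 1 / 2) ::ₘ Multiset.replicate (T - 1) (1 / 2) := by
  have hmonic := (monic_X_sub_C (1 : ℝ)).mul (monic_X_sub_C (wC / (wC + T * wS) - 1 / 2))
  rw [charpoly_starM hT hD, roots_mul (hmonic.mul ((monic_X_sub_C _).pow _)).ne_zero,
    roots_mul hmonic.ne_zero, roots_X_sub_C, roots_X_sub_C, roots_pow, roots_X_sub_C,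
    Multiset.nsmul_singleton]
  simp

theorem starM_isDiagonalizable (T : ℕ) {wC wS : ℝ} (hwC : 0 < wC) (hwS : 0 < wS) :
    (starM T wC wS).IsDiagonalizable := by
  refine IsDiagonalizable.of_detailedBalance
    (π := fun i => if i = 0 then wC + T * wS else 2 * wS) (fun i => by split_ifs <;> positivity) ?_
  intro i j
  by_cases hi : i = 0 <;> by_cases hj : j = 0
  · rw [hi, hj]
  all_goals simp only [starM, hi, hj, if_true, if_false]
  · field_simp
  · field_simp
  · rcases eq_or_ne i j with rfl | hij
    · rfl
    · simp [hij, hij.symm]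

section Spectrum

variable {α : Type*} [Fintype α] [DecidableEq α]

theorem abs_le_one_sub_twoSidedGap [Nonempty α] {B : Matrix α α ℝ} (hB : B.IsSymm)
    (hBrs : RowStochastic B) {x : ℝ} (hx : x ∈ (eigs B).erase 1) : |x| ≤ 1 - twoSidedGap B := by
  have hcard : Multiset.card (eigs B) = Fintype.card α :=
    (IsDiagonalizable.of_isSymm hB).card_roots_charpoly
  have hle : ∀ y ∈ eigs B, y ≤ 1 := fun y hy =>
    (abs_le.mp (hBrs.abs_le_one_of_mem_roots_charpoly hy)).2
  have hmin : minEig B ≤ x := Multiset.sort_getD_zero_le 0 (Multiset.mem_of_mem_erase hx)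
  have hsec : x ≤ secondEig B := by
    rw [secondEig, sortedEigs, ← hcard]
    exact Multiset.le_sort_getD_card_sub_two 0 hBrs.one_mem_roots_charpoly hle hx
  rw [twoSidedGap, sub_sub_cancel, max_comm]
  exact abs_le_max_abs_abs hmin hsec

theorem count_one_eigs_eq_one [Nonempty α] {B : Matrix α α ℝ} (hB : B.IsSymm)
    (hBrs : RowStochastic B) (hgap : 0 < twoSidedGap B) : (eigs B).count 1 = 1 := by
  have hpos : 0 < (eigs B).count 1 := Multiset.count_pos.mpr hBrs.one_mem_roots_charpoly
  have herase : ((eigs B).erase 1).count 1 = 0 := Multiset.count_eq_zero.mpr fun h => by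
    have := abs_le_one_sub_twoSidedGap hB hBrs h
    rw [abs_one] at this
    linarith
  rw [Multiset.count_erase_self] at herase
  omega

theorem exists_eigs_starM_kronecker_eq_add {T : ℕ} (hT : 1 ≤ T) {wC wS : ℝ} (hwC : 0 < wC)
    (hwS : 0 < wS) {B : Matrix α α ℝ} (hB : B.IsSymm) (hBrs : RowStochastic B) :
    ∃ R : Multiset ℝ, eigs (starM T wC wS ⊗ₖ B) = eigs B + R ∧ ∀ y ∈ R, |y| ≤ 1 / 2 := by
  have hD : 0 < wC + T * wS := by positivity
  have hc : |wC / (wC + T * wS) - 1 / 2| ≤ 1 / 2 := by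
    have h0 : 0 ≤ wC / (wC + T * wS) := by positivity
    have h1 : wC / (wC + T * wS) ≤ 1 :=
      div_le_one_of_le₀ (le_add_of_nonneg_right (by positivity)) hD.le
    rw [abs_le]
    constructor <;> linarith
  set rest := (wC / (wC + T * wS) - 1 / 2) ::ₘ Multiset.replicate (T - 1) (1 / 2 : ℝ)
  have hrest : ∀ a ∈ rest, |a| ≤ 1 / 2 := by
    intro a ha
    rcases Multiset.mem_cons.mp ha with rfl | ha
    · exact hc
    · rw [Multiset.eq_of_mem_replicate ha, abs_of_pos one_half_pos]
  refine ⟨(rest ×ˢ eigs B).map fun p => p.1 * p.2, ?_, ?_⟩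
  · rw [eigs, roots_charpoly_kronecker (starM_isDiagonalizable T hwC hwS)
      (IsDiagonalizable.of_isSymm hB), roots_charpoly_starM hT hD.ne', Multiset.cons_product,
      Multiset.map_add, Multiset.map_map]
    congr 1
    simp [eigs]
  · intro y hy
    obtain ⟨⟨a, b⟩, hab, rfl⟩ := Multiset.mem_map.mp hy
    rw [Multiset.mem_product] at hab
    calc |a * b| = |a| * |b| := abs_mul a b
      _ ≤ 1 / 2 * 1 := mul_le_mul (hrest a hab.1) (hBrs.abs_le_one_of_mem_roots_charpoly hab.2)
          (abs_nonneg b) one_half_pos.le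
      _ = 1 / 2 := mul_one _

end Spectrum

/-- local-expansion bound for links contained in a single cluster:
all eigenvalues of M ⊗ B are real, 1 is a simple eigenvalue, and all others have
absolute value at most max(1 − TwoSidedGap(B), 1/2). -/
theorem stmt_4 (T : ℕ) (hT : 1 ≤ T) (wC wS : ℝ) (hwC : 0 < wC) (hwS : 0 < wS)
    {m : ℕ} (hm : 2 ≤ m)
    (B : Matrix (Fin m) (Fin m) ℝ) (hBsym : B.IsSymm) (hBrs : RowStochastic B)
    (hgap : 0 < twoSidedGap B) :
    Multiset.card (eigs (starM T wC wS ⊗ₖ B)) = (T + 1) * m ∧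
    Multiset.count 1 (eigs (starM T wC wS ⊗ₖ B)) = 1 ∧
    (∀ μ ∈ (eigs (starM T wC wS ⊗ₖ B)).erase 1,
      |μ| ≤ max (1 - twoSidedGap B) (1 / 2)) := by
  have : Nonempty (Fin m) := ⟨⟨0, by omega⟩⟩
  have hcard : Multiset.card (eigs (starM T wC wS ⊗ₖ B)) = (T + 1) * m := by
    rw [eigs, ((starM_isDiagonalizable T hwC hwS).kronecker
      (IsDiagonalizable.of_isSymm hBsym)).card_roots_charpoly, Fintype.card_prod,
      Fintype.card_fin, Fintype.card_fin]
  obtain ⟨R, hsplit, hR⟩ := exists_eigs_starM_kronecker_eq_add hT hwC hwS hBsym hBrs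
  have hR1 : R.count 1 = 0 := Multiset.count_eq_zero.mpr fun h => by
    have := hR 1 h
    rw [abs_one] at this
    linarith
  refine ⟨hcard, by rw [hsplit, Multiset.count_add, count_one_eigs_eq_one hBsym hBrs hgap, hR1],
    fun μ hμ => ?_⟩
  have h1 : (1 : ℝ) ∈ eigs B := hBrs.one_mem_roots_charpoly
  rw [hsplit, Multiset.erase_add_left_pos _ h1, Multiset.mem_add] at hμ
  rcases hμ with hμ | hμ
  · exact (abs_le_one_sub_twoSidedGap hBsym hBrs hμ).trans (le_max_left _ _)
  · exact (hR μ hμ).trans (le_max_right _ _)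
end

section
/- Fix integers k ≥ 1, s ≥ k+2, T ≥ 1 and reals w_I, w_J > 0. Set p = (1/(T(k+1)(s−k))) · (((2^k − 2)T + 1)·T·w_I + w_J)/((2^k − 1)·T·w_I + w_J). Define the inner projection matrix P_I on state space {S ⊆ {1,…,s} : |S| = k+1} by P_I[S,S'] = p when |S ∩ S'| = k, P_I[S,S] = 1 − (k+1)(s−k−1)·p, and P_I[S,S'] = 0 otherwise. Then the diagonal entries of P_I are nonnegative, P_I is a symmetric row-stochastic matrix, and OneSidedGap(P_I) ≥ 1/(2T(k+1)). -/
open Matrix Finset BigOperators Kronecker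

/-! Let `W` be the inclusion matrix of `k`-subsets in `(k+1)`-subsets of `Fin s`. Then
`P_I = (1 - (k+1)(s-k)p) • 1 + p • WᵀW`. The commutation relation
`W' W'ᵀ = WᵀW + (s - 2(k+1)) • 1` with the inclusion matrix `W'` one level up gives, by
induction on the level and Cauchy–Schwarz, `‖W x‖² ≤ k (s-k-1) ‖x‖²` for `x ⊥ 1`, so the
quadratic form of `P_I` is at most `1 - p s` on `1ᗮ`. A symmetric matrix whose form is bounded
by `c` on a hyperplane has at most one eigenvalue above `c`, hence `λ₂ ≤ 1 - p s`; finally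
`p s ≥ 1/(2T(k+1))` because the weight ratio in `p` lies in `[1/2, T]`. -/

theorem Finset.powersetCard_univ_filter_subset {α : Type*} [Fintype α] [DecidableEq α]
    (B : Finset α) (r : ℕ) : (univ.powersetCard r).filter (· ⊆ B) = B.powersetCard r := by
  ext T
  simp [and_comm]

abbrev Slice (s j : ℕ) := {S : Finset (Fin s) // S.card = j}

namespace Slice

variable {s j : ℕ}

theorem sum_ite_eq_card_filter (q : Finset (Fin s) → Prop) [DecidablePred q] :
    ∑ S : Slice s j, (if q S.1 then (1 : ℝ) else 0) = #((univ.powersetCard j).filter q) := by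
  rw [← sum_boole]
  exact (sum_subtype _ (fun _ => by simp [mem_powersetCard])
    (fun R => if q R then (1 : ℝ) else 0)).symm

theorem card_inter_lt {S S' : Slice s j} (h : S ≠ S') : #(S.1 ∩ S'.1) < j := by
  have hle : #(S.1 ∩ S'.1) ≤ j := (card_le_card inter_subset_left).trans_eq S.2
  refine hle.lt_of_ne fun hc => h (Subtype.ext ?_)
  have hSS' : S.1 ⊆ S'.1 :=
    inter_eq_left.mp (eq_of_subset_of_card_le inter_subset_left (by rw [hc, S.2]))
  exact eq_of_subset_of_card_le hSS' (by rw [S.2, S'.2])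

end Slice

def inclusionMatrix (s a b : ℕ) : Matrix (Slice s a) (Slice s b) ℝ :=
  fun T S => if T.1 ⊆ S.1 then 1 else 0

section inclusionMatrix

variable {s : ℕ}

theorem one_vecMul_inclusionMatrix (a b : ℕ) :
    1 ᵥ* inclusionMatrix s a b = (b.choose a : ℝ) • 1 := by
  funext S
  simp only [vecMul, dotProduct, Pi.one_apply, one_mul, inclusionMatrix, Pi.smul_apply,
    smul_eq_mul, mul_one]
  rw [Slice.sum_ite_eq_card_filter (· ⊆ S.1), powersetCard_univ_filter_subset,
    card_powersetCard, S.2]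

theorem inclusionMatrix_mulVec_one {a b : ℕ} (hab : a ≤ b) :
    inclusionMatrix s a b *ᵥ 1 = ((s - a).choose (b - a) : ℝ) • 1 := by
  funext T
  simp only [mulVec, dotProduct, Pi.one_apply, mul_one, inclusionMatrix, Pi.smul_apply,
    smul_eq_mul]
  rw [Slice.sum_ite_eq_card_filter (T.1 ⊆ ·),
    card_filter_powersetCard_subset _ _ _ (subset_univ _) (by rw [T.2]; exact hab), card_univ,
    Fintype.card_fin, T.2]

theorem sum_inclusionMatrix_mulVec (a b : ℕ) (x : Slice s b → ℝ) :
    ∑ T, (inclusionMatrix s a b *ᵥ x) T = b.choose a * ∑ S, x S := by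
  rw [← one_dotProduct, dotProduct_mulVec, one_vecMul_inclusionMatrix, smul_dotProduct,
    one_dotProduct, smul_eq_mul]

theorem transpose_mul_inclusionMatrix_apply (a b : ℕ) (S S' : Slice s b) :
    ((inclusionMatrix s a b)ᵀ * inclusionMatrix s a b) S S'
      = ((#(S.1 ∩ S'.1)).choose a : ℝ) := by
  simp only [mul_apply, transpose_apply, inclusionMatrix, ite_zero_mul_ite_zero, mul_one,
    ← subset_inter_iff]
  rw [Slice.sum_ite_eq_card_filter (· ⊆ S.1 ∩ S'.1), powersetCard_univ_filter_subset,
    card_powersetCard]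

theorem inclusionMatrix_mul_transpose_apply (a b : ℕ) (T T' : Slice s a) :
    (inclusionMatrix s a b * (inclusionMatrix s a b)ᵀ) T T'
      = #((univ.powersetCard b).filter (T.1 ∪ T'.1 ⊆ ·)) := by
  simp only [mul_apply, transpose_apply, inclusionMatrix, ite_zero_mul_ite_zero, mul_one,
    ← union_subset_iff]
  exact Slice.sum_ite_eq_card_filter (T.1 ∪ T'.1 ⊆ ·)

theorem inclusionMatrix_mul_transpose_succ (j : ℕ) (hj : j + 2 ≤ s) :
    inclusionMatrix s (j + 1) (j + 2) * (inclusionMatrix s (j + 1) (j + 2))ᵀ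
      = (inclusionMatrix s j (j + 1))ᵀ * inclusionMatrix s j (j + 1)
        + ((s : ℝ) - 2 * (j + 1)) • 1 := by
  ext S S'
  rw [Matrix.add_apply, inclusionMatrix_mul_transpose_apply, transpose_mul_inclusionMatrix_apply,
    Matrix.smul_apply, one_apply, smul_eq_mul]
  rcases eq_or_ne S S' with rfl | hne
  · rw [union_self, inter_self, card_filter_powersetCard_subset _ _ _ (subset_univ _)
      (by omega), card_univ, Fintype.card_fin, S.2, show j + 2 - (j + 1) = 1 by omega,
      Nat.choose_one_right, Nat.choose_succ_self_right, if_pos rfl,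
      Nat.cast_sub (by omega : j + 1 ≤ s)]
    push_cast
    ring
  · have hcard := card_union_add_card_inter S.1 S'.1
    rw [S.2, S'.2] at hcard
    rw [if_neg hne, mul_zero, add_zero]
    rcases Nat.lt_succ_iff_lt_or_eq.mp (Slice.card_inter_lt hne) with hlt | heq
    · rw [Nat.choose_eq_zero_of_lt (by omega), Nat.cast_zero, Nat.cast_eq_zero, card_eq_zero,
        filter_eq_empty_iff]
      intro R hR hsub
      have := card_le_card hsub
      rw [(mem_powersetCard.mp hR).2] at this
      omega
    · rw [card_filter_powersetCard_subset _ _ _ (subset_univ _) (by omega)]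
      simp [show #(S.1 ∪ S'.1) = j + 2 by omega, heq]

end inclusionMatrix

section QuadraticForm

variable {m n : Type*} [Fintype m] [Fintype n]

theorem dotProduct_transpose_mul_self_mulVec {R : Type*} [CommSemiring R] (A : Matrix m n R)
    (x : n → R) : x ⬝ᵥ ((Aᵀ * A) *ᵥ x) = (A *ᵥ x) ⬝ᵥ (A *ᵥ x) := by
  rw [← mulVec_mulVec, dotProduct_mulVec, vecMul_transpose]

theorem dotProduct_self_nonneg (x : n → ℝ) : 0 ≤ x ⬝ᵥ x :=
  sum_nonneg fun i _ => mul_self_nonneg (x i)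

/-- By Cauchy–Schwarz, `‖Ax‖² = ⟪x, AᵀAx⟫ ≤ ‖x‖ ‖AᵀAx‖ ≤ √c ‖x‖ ‖Ax‖`. -/
theorem mulVec_dotProduct_self_le_of_transpose {A : Matrix m n ℝ} {x : n → ℝ} {c : ℝ}
    (hc : 0 ≤ c)
    (h : (Aᵀ *ᵥ (A *ᵥ x)) ⬝ᵥ (Aᵀ *ᵥ (A *ᵥ x))
      ≤ c * ((A *ᵥ x) ⬝ᵥ (A *ᵥ x))) :
    (A *ᵥ x) ⬝ᵥ (A *ᵥ x) ≤ c * (x ⬝ᵥ x) := by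
  have hCS : ((A *ᵥ x) ⬝ᵥ (A *ᵥ x)) ^ 2
      ≤ (x ⬝ᵥ x) * ((Aᵀ *ᵥ (A *ᵥ x)) ⬝ᵥ (Aᵀ *ᵥ (A *ᵥ x))) := by
    rw [← dotProduct_transpose_mul_self_mulVec, ← mulVec_mulVec]
    simpa only [dotProduct, sq] using sum_mul_sq_le_sq_mul_sq univ x (Aᵀ *ᵥ (A *ᵥ x))
  nlinarith [mul_le_mul_of_nonneg_left h (dotProduct_self_nonneg x),
    mul_nonneg hc (dotProduct_self_nonneg x), dotProduct_self_nonneg (A *ᵥ x)]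

end QuadraticForm

theorem inclusionMatrix_mulVec_dotProduct_self_le {s : ℕ} (j : ℕ) (hj : j + 1 ≤ s)
    (x : Slice s (j + 1) → ℝ) (hx : ∑ S, x S = 0) :
    (inclusionMatrix s j (j + 1) *ᵥ x) ⬝ᵥ (inclusionMatrix s j (j + 1) *ᵥ x)
      ≤ j * (s - (j + 1)) * (x ⬝ᵥ x) := by
  induction j with
  | zero =>
    have hzero : inclusionMatrix s 0 1 *ᵥ x = 0 := by
      funext T
      simpa [mulVec, dotProduct, inclusionMatrix, card_eq_zero.mp T.2] using hx
    simp [hzero]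
  | succ j ih =>
    have hj' : (j : ℝ) + 2 ≤ s := by exact_mod_cast hj
    set y := inclusionMatrix s (j + 1) (j + 2) *ᵥ x
    have hy := ih (by omega) y (by rw [sum_inclusionMatrix_mulVec, hx, mul_zero])
    push_cast
    refine mulVec_dotProduct_self_le_of_transpose (by nlinarith) ?_
    rw [← dotProduct_transpose_mul_self_mulVec, transpose_transpose,
      inclusionMatrix_mul_transpose_succ j hj, add_mulVec, dotProduct_add,
      dotProduct_transpose_mul_self_mulVec, smul_mulVec, one_mulVec, dotProduct_smul,
      smul_eq_mul]
    linear_combination hy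

theorem List.getD_length_sub_two_le {α : Type*} [LinearOrder α] {L : List α}
    (hL : L.Pairwise (· ≤ ·)) (h2 : 2 ≤ L.length) {c : α} (hc : L.countP (c < ·) ≤ 1)
    (d : α) : L.getD (L.length - 2) d ≤ c := by
  by_contra! hlt
  have hidx : L.length - 2 < L.length := by omega
  rw [getD_eq_getElem?_getD, getElem?_eq_getElem hidx, Option.getD_some] at hlt
  have htail : L.drop (L.length - 2) = L[L.length - 2] :: L.drop (L.length - 2 + 1) :=
    drop_eq_getElem_cons hidx
  have hall : ∀ x ∈ L.drop (L.length - 2), c < x := by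
    have hsorted := htail ▸ hL.sublist (drop_sublist _ _)
    rw [htail]
    rintro x (_ | ⟨_, hx⟩)
    · exact hlt
    · exact hlt.trans_le ((pairwise_cons.mp hsorted).1 x hx)
  have hcount : (L.drop (L.length - 2)).countP (c < ·) = 2 := by
    rw [countP_eq_length.mpr (by simpa using hall), length_drop]
    omega
  have := (drop_sublist (L.length - 2) L).countP_le (p := (c < ·))
  omega

section Spectrum

variable {n : Type*} [Fintype n] [DecidableEq n]

theorem Matrix.IsHermitian.card_filter_lt_eigenvalues_le_one {A : Matrix n n ℝ}
    (hA : A.IsHermitian) (u : n → ℝ) {c : ℝ}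
    (hc : ∀ x, u ⬝ᵥ x = 0 → x ⬝ᵥ (A *ᵥ x) ≤ c * (x ⬝ᵥ x)) :
    #(univ.filter fun i => c < hA.eigenvalues i) ≤ 1 := by
  rw [card_le_one]
  intro i hi j hj
  by_contra hij
  simp only [mem_filter, mem_univ, true_and] at hi hj
  set v : n → n → ℝ := fun i => ⇑(hA.eigenvectorBasis i)
  have hv : ∀ i j, v i ⬝ᵥ v j = if i = j then 1 else 0 := by
    intro i j
    rw [← orthonormal_iff_ite.mp hA.eigenvectorBasis.orthonormal i j, PiLp.inner_apply]
    simp [v, dotProduct, mul_comm]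
  have hAv : ∀ i, A *ᵥ v i = hA.eigenvalues i • v i := hA.mulVec_eigenvectorBasis
  by_cases ha : u ⬝ᵥ v i = 0
  · have := hc (v i) ha
    rw [hAv, dotProduct_smul, hv, if_pos rfl, smul_eq_mul] at this
    linarith
  set w := (u ⬝ᵥ v j) • v i - (u ⬝ᵥ v i) • v j
  have hw := hc w (by simp only [w, dotProduct_sub, dotProduct_smul, smul_eq_mul]; ring)
  simp only [w, mulVec_sub, mulVec_smul, hAv, sub_dotProduct, dotProduct_sub, smul_dotProduct,
    dotProduct_smul, hv, if_true, if_neg hij, if_neg (Ne.symm hij), smul_eq_mul] at hw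
  nlinarith [sq_pos_of_ne_zero ha, sq_nonneg (u ⬝ᵥ v j)]

theorem secondEig_le_of_dotProduct_mulVec_le {A : Matrix n n ℝ} (hA : A.IsHermitian)
    (hn : 2 ≤ Fintype.card n) (u : n → ℝ) {c : ℝ}
    (hc : ∀ x, u ⬝ᵥ x = 0 → x ⬝ᵥ (A *ᵥ x) ≤ c * (x ⬝ᵥ x)) :
    secondEig A ≤ c := by
  have heigs : eigs A = univ.val.map hA.eigenvalues := by
    simpa [eigs] using hA.roots_charpoly_eq_eigenvalues
  have hlen : (sortedEigs A).length = Fintype.card n := by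
    simp [sortedEigs, heigs]
  rw [secondEig, ← hlen]
  refine List.getD_length_sub_two_le (Multiset.pairwise_sort _ _) (hlen ▸ hn) ?_ 0
  rw [← Multiset.coe_countP, Multiset.sort_eq, heigs, Multiset.countP_map]
  exact hA.card_filter_lt_eigenvalues_le_one u hc

end Spectrum

/-- Since `(Wᵀ W) S S' = (#(S ∩ S')).choose j` is `j + 1` on the diagonal, `1` between
neighbours in the Johnson graph and `0` otherwise, this is the walk that moves to each neighbour
with probability `p` (`lazyJohnsonWalk_apply`). -/
noncomputable def lazyJohnsonWalk (s j : ℕ) (p : ℝ) :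
    Matrix (Slice s (j + 1)) (Slice s (j + 1)) ℝ :=
  (1 - (j + 1) * (s - j) * p) • 1
    + p • ((inclusionMatrix s j (j + 1))ᵀ * inclusionMatrix s j (j + 1))

section lazyJohnsonWalk

variable {s j : ℕ} {p : ℝ}

theorem lazyJohnsonWalk_apply (S S' : Slice s (j + 1)) :
    lazyJohnsonWalk s j p S S' =
      if S = S' then 1 - ((j : ℝ) + 1) * ((s : ℝ) - j - 1) * p
      else if #(S.1 ∩ S'.1) = j then p else 0 := by
  simp only [lazyJohnsonWalk, Matrix.add_apply, Matrix.smul_apply, one_apply,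
    transpose_mul_inclusionMatrix_apply, smul_eq_mul]
  rcases eq_or_ne S S' with rfl | hne
  · simp only [inter_self, S.2, Nat.choose_succ_self_right]
    push_cast
    ring
  · rw [if_neg hne, if_neg hne]
    rcases Nat.lt_succ_iff_lt_or_eq.mp (Slice.card_inter_lt hne) with hlt | heq
    · simp [hlt.ne, Nat.choose_eq_zero_of_lt hlt]
    · simp [heq]

theorem lazyJohnsonWalk_isSymm : (lazyJohnsonWalk s j p).IsSymm :=
  (isSymm_one.smul _).add (IsSymm.smul (by simp [IsSymm, transpose_mul]) _)

theorem lazyJohnsonWalk_mulVec_one (hj : j + 1 ≤ s) : lazyJohnsonWalk s j p *ᵥ 1 = 1 := by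
  rw [lazyJohnsonWalk, add_mulVec, smul_mulVec, smul_mulVec, one_mulVec, ← mulVec_mulVec,
    inclusionMatrix_mulVec_one (by omega), mulVec_smul, mulVec_transpose,
    one_vecMul_inclusionMatrix, Nat.add_sub_cancel_left, Nat.choose_one_right,
    Nat.choose_succ_self_right, Nat.cast_sub (by omega), smul_smul, smul_smul, ← add_smul]
  convert one_smul ℝ (1 : Slice s (j + 1) → ℝ) using 2
  push_cast
  ring

theorem rowStochastic_lazyJohnsonWalk (hj : j + 1 ≤ s) (hp : 0 ≤ p)
    (hdiag : ((j : ℝ) + 1) * ((s : ℝ) - j - 1) * p ≤ 1) :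
    RowStochastic (lazyJohnsonWalk s j p) := by
  refine ⟨fun S S' => ?_, fun S => ?_⟩
  · rw [lazyJohnsonWalk_apply]
    split_ifs <;> linarith
  · simpa [mulVec, dotProduct] using congrFun (lazyJohnsonWalk_mulVec_one (p := p) hj) S

theorem dotProduct_lazyJohnsonWalk_mulVec_le (hj : j + 1 ≤ s) (hp : 0 ≤ p)
    (x : Slice s (j + 1) → ℝ) (hx : 1 ⬝ᵥ x = 0) :
    x ⬝ᵥ (lazyJohnsonWalk s j p *ᵥ x) ≤ (1 - p * s) * (x ⬝ᵥ x) := by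
  have hW := inclusionMatrix_mulVec_dotProduct_self_le j hj x (by rwa [one_dotProduct] at hx)
  rw [lazyJohnsonWalk, add_mulVec, smul_mulVec, smul_mulVec, one_mulVec, dotProduct_add,
    dotProduct_smul, dotProduct_smul, dotProduct_transpose_mul_self_mulVec, smul_eq_mul,
    smul_eq_mul]
  linear_combination p * hW

theorem secondEig_lazyJohnsonWalk_le (hj : j + 2 ≤ s) (hp : 0 ≤ p) :
    secondEig (lazyJohnsonWalk s j p) ≤ 1 - p * s := by
  have hcard : 2 ≤ Fintype.card (Slice s (j + 1)) := by
    rw [Fintype.card_finset_len, Fintype.card_fin]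
    calc 2 ≤ (j + 2).choose (j + 1) := by rw [Nat.choose_succ_self_right]; omega
      _ ≤ s.choose (j + 1) := Nat.choose_le_choose _ hj
  exact secondEig_le_of_dotProduct_mulVec_le
    (isHermitian_iff_isSymm.mpr lazyJohnsonWalk_isSymm) hcard 1
    fun x hx => dotProduct_lazyJohnsonWalk_mulVec_le (by omega) hp x hx

end lazyJohnsonWalk

theorem weightRatio_mem_Icc {a T wI wJ : ℝ} (ha : 2 ≤ a) (hT : 1 ≤ T) (hwI : 0 ≤ wI)
    (hwJ : 0 < wJ) :
    (((a - 2) * T + 1) * T * wI + wJ) / ((a - 1) * T * wI + wJ) ∈ Set.Icc (1 / 2) T := by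
  have hTw : 0 ≤ T * wI := mul_nonneg (by linarith) hwI
  have hden : 0 < (a - 1) * T * wI + wJ := by nlinarith
  -- for the ratio `N / D`: `2N - D = ((a - 2)(2T - 1) + 1) T wI + wJ`, `TD - N = (T - 1)(T wI + wJ)`
  constructor
  · rw [le_div_iff₀ hden]
    nlinarith [mul_nonneg (mul_nonneg (sub_nonneg.2 ha) (by linarith : 0 ≤ 2 * T - 1)) hTw]
  · rw [div_le_iff₀ hden]
    nlinarith [mul_nonneg (sub_nonneg.2 hT) hTw, mul_nonneg (sub_nonneg.2 hT) hwJ.le]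

theorem transitionRate_bounds {T k s r p : ℝ} (hT : 0 < T) (hk : 0 ≤ k) (hks : k + 1 ≤ s)
    (hr : r ∈ Set.Icc (1 / 2) T) (hp : p = r / (T * (k + 1) * (s - k))) :
    0 ≤ p ∧ (k + 1) * (s - k - 1) * p ≤ 1 ∧ 1 / (2 * T * (k + 1)) ≤ p * s := by
  obtain ⟨hr₁, hr₂⟩ := hr
  have hTk : 0 < T * (k + 1) := by positivity
  have hZ : 0 < T * (k + 1) * (s - k) := mul_pos hTk (by linarith)
  subst hp
  refine ⟨div_nonneg (by linarith) hZ.le, ?_, ?_⟩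
  · rw [mul_div_assoc', div_le_one hZ]
    have hsk : 0 ≤ (k + 1) * (s - k - 1) := mul_nonneg (by positivity) (by linarith)
    nlinarith [mul_le_mul_of_nonneg_left hr₂ hsk]
  · rw [div_mul_eq_mul_div, div_le_div_iff₀ (by positivity) hZ]
    have hs2r : s - k ≤ 2 * r * s := by nlinarith
    nlinarith [mul_le_mul_of_nonneg_left hs2r hTk.le]

/-- the inner projection chain P_I on (k+1)-subsets of an s-element set,
with off-diagonal transition probability p, has nonnegative diagonal, is symmetric
row-stochastic, and satisfies OneSidedGap(P_I) ≥ 1/(2T(k+1)). -/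
theorem stmt_12 (k s T : ℕ) (hk : 1 ≤ k) (hs : k + 2 ≤ s) (hT : 1 ≤ T)
    (wI wJ : ℝ) (hwI : 0 < wI) (hwJ : 0 < wJ)
    (p : ℝ)
    (hp : p = (1 / ((T : ℝ) * ((k : ℝ) + 1) * ((s : ℝ) - k)))
        * ((((2 : ℝ) ^ k - 2) * T + 1) * T * wI + wJ) / (((2 : ℝ) ^ k - 1) * T * wI + wJ))
    (PI : Matrix {S : Finset (Fin s) // S.card = k + 1} {S : Finset (Fin s) // S.card = k + 1} ℝ)
    (hPI : ∀ S S', PI S S' =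
      if S = S' then 1 - ((k : ℝ) + 1) * ((s : ℝ) - k - 1) * p
      else if (S.1 ∩ S'.1).card = k then p else 0) :
    (∀ S, 0 ≤ PI S S) ∧ RowStochastic PI ∧ PI.IsSymm ∧
    oneSidedGap PI ≥ 1 / (2 * (T : ℝ) * ((k : ℝ) + 1)) := by
  have h2k : (2 : ℝ) ≤ 2 ^ k := by
    simpa using pow_le_pow_right₀ (by norm_num : (1 : ℝ) ≤ 2) hk
  obtain ⟨hp0, hdiag, hgap⟩ := transitionRate_bounds (T := T) (k := k) (s := s) (p := p)
    (by positivity) k.cast_nonneg (by exact_mod_cast (by omega : k + 1 ≤ s))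
    (weightRatio_mem_Icc h2k (by exact_mod_cast hT) hwI.le hwJ) (by rw [hp]; ring)
  obtain rfl : PI = lazyJohnsonWalk s k p := by
    ext S S'
    rw [hPI, lazyJohnsonWalk_apply]
  have hstoch := rowStochastic_lazyJohnsonWalk (by omega) hp0 hdiag
  refine ⟨fun S => hstoch.1 S S, hstoch, lazyJohnsonWalk_isSymm, ?_⟩
  rw [ge_iff_le, oneSidedGap]
  linarith [secondEig_lazyJohnsonWalk_le hs hp0]
end
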